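/- Let a > 0, let D denote the closed ball of radius a centered at 0 in ℝ², and let I ⊆ ℝ be a measurable set. Let u : ℝ × ℝ² → ℝ be continuously differentiable (of class C¹) with u and its gradient square-integrable on I × D. Define the disk average ū(s) = (π a²)⁻¹ ∫_{D} u(s, y) dy. Then ∫_{I} ( ū(s)² + ū'(s)² ) ds ≤ (π a²)⁻¹ ∫_{I × D} ( u(x)² + ‖Du(x)‖² ) dx; in particular the H¹-type norm of the average on the centerline is controlled by (√π a)⁻¹ times the H¹-type norm of u on the cylinder. -/

import Mathlib

open MeasureTheory Metric Real

/-- Cauchy–Schwarz for a finite measure: `(∫ v)² ≤ ν(univ) * ∫ v²`. -/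
lemma sq_integral_le_measure_mul {α : Type*} [MeasurableSpace α] (ν : Measure α)
    [IsFiniteMeasure ν] {v : α → ℝ} (hv : Integrable v ν)
    (hv2 : Integrable (fun x => (v x) ^ 2) ν) :
    (∫ x, v x ∂ν) ^ 2 ≤ (ν Set.univ).toReal * ∫ x, (v x) ^ 2 ∂ν := by
  set T := (ν Set.univ).toReal with hTdef
  set m := ∫ x, v x ∂ν with hm
  have hT0 : 0 ≤ T := ENNReal.toReal_nonneg
  rcases eq_or_lt_of_le hT0 with hT | hT
  · -- measure is zero
    have hν : ν = 0 := by
      have := (ENNReal.toReal_eq_zero_iff _).mp hT.symm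
      rcases this with h | h
      · exact Measure.measure_univ_eq_zero.mp h
      · exact absurd h (measure_ne_top ν _)
    simp [hm, hν, ← hT]
  · have key : 0 ≤ ∫ x, (v x - T⁻¹ * m) ^ 2 ∂ν :=
      integral_nonneg fun x => sq_nonneg _
    have expand : ∫ x, (v x - T⁻¹ * m) ^ 2 ∂ν
        = (∫ x, (v x) ^ 2 ∂ν) - 2 * (T⁻¹ * m) * m + (T⁻¹ * m) ^ 2 * T := by
      have hfun : (fun x => (v x - T⁻¹ * m) ^ 2)
          = fun x => ((v x) ^ 2 - (2 * (T⁻¹ * m)) * v x) + (T⁻¹ * m) ^ 2 := by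
        funext x; ring
      have i1 : Integrable (fun x => v x ^ 2 - 2 * (T⁻¹ * m) * v x) ν :=
        hv2.sub (hv.const_mul (2 * (T⁻¹ * m)))
      have i2 : Integrable (fun x => 2 * (T⁻¹ * m) * v x) ν := hv.const_mul (2 * (T⁻¹ * m))
      rw [hfun, integral_add i1 (integrable_const _),
        integral_sub hv2 i2, integral_const_mul, integral_const]
      simp only [smul_eq_mul, measureReal_def, ← hm, ← hTdef]
      ring
    have h2 : 2 * (T⁻¹ * m) * m - (T⁻¹ * m) ^ 2 * T ≤ ∫ x, (v x) ^ 2 ∂ν := by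
      nlinarith [key, expand]
    have hTne : T ≠ 0 := ne_of_gt hT
    have : T⁻¹ * m ^ 2 ≤ ∫ x, (v x) ^ 2 ∂ν := by
      have : 2 * (T⁻¹ * m) * m - (T⁻¹ * m) ^ 2 * T = T⁻¹ * m ^ 2 := by
        field_simp; ring
      linarith [h2, this.symm.le]
    calc m ^ 2 = T * (T⁻¹ * m ^ 2) := by field_simp
    _ ≤ T * ∫ x, (v x) ^ 2 ∂ν := by
        exact mul_le_mul_of_nonneg_left this hT0

theorem disk_average_H1_bound (a : ℝ) (ha : 0 < a)
    (I : Set ℝ) (hI : MeasurableSet I)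
    (u : ℝ × EuclideanSpace ℝ (Fin 2) → ℝ) (hu : ContDiff ℝ 1 u)
    (husq : IntegrableOn (fun x => (u x) ^ 2)
      (I ×ˢ (closedBall (0 : EuclideanSpace ℝ (Fin 2)) a)))
    (hgrad : IntegrableOn (fun x => ‖fderiv ℝ u x‖ ^ 2)
      (I ×ˢ (closedBall (0 : EuclideanSpace ℝ (Fin 2)) a)))
    (ubar : ℝ → ℝ)
    (hubar : ∀ s, ubar s =
      (π * a ^ 2)⁻¹ * ∫ y in closedBall (0 : EuclideanSpace ℝ (Fin 2)) a, u (s, y)) :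
    ∫ s in I, ((ubar s) ^ 2 + (deriv ubar s) ^ 2) ≤
      (π * a ^ 2)⁻¹ *
        ∫ x in I ×ˢ (closedBall (0 : EuclideanSpace ℝ (Fin 2)) a),
          ((u x) ^ 2 + ‖fderiv ℝ u x‖ ^ 2) := by
  set D : Set (EuclideanSpace ℝ (Fin 2)) := closedBall (0 : EuclideanSpace ℝ (Fin 2)) a with hD
  have hDc : IsCompact D := isCompact_closedBall _ _
  have hDm : MeasurableSet D := measurableSet_closedBall
  set c : ℝ := π * a ^ 2 with hcdef
  have hc0 : 0 < c := by positivity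
  -- volume of the disk
  have hvol : (volume D).toReal = c := by
    rw [hD, EuclideanSpace.volume_closedBall (Fin 2) 0 a]
    rw [Fintype.card_fin]
    rw [show ((2 : ℕ) : ℝ) / 2 + 1 = 2 by norm_num, Real.Gamma_two]
    rw [Real.sq_sqrt pi_nonneg]
    rw [ENNReal.toReal_mul, ENNReal.toReal_pow, ENNReal.toReal_ofReal ha.le,
      ENNReal.toReal_ofReal (by positivity)]
    simp [hcdef]; ring
  haveI hfin : IsFiniteMeasure (volume.restrict D) :=
    ⟨by rw [Measure.restrict_apply_univ]; exact hDc.measure_lt_top⟩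
  have hunivD : ((volume.restrict D) Set.univ).toReal = c := by
    rw [Measure.restrict_apply_univ, hvol]
  -- continuity facts
  have hu_cont : Continuous u := hu.continuous
  have hDu_cont : Continuous (fderiv ℝ u) := hu.continuous_fderiv one_ne_zero
  have hu_diff : Differentiable ℝ u := hu.differentiable one_ne_zero
  -- partial derivative in s
  set v : ℝ → EuclideanSpace ℝ (Fin 2) → ℝ := fun s y => fderiv ℝ u (s, y) ((1 : ℝ), (0 : EuclideanSpace ℝ (Fin 2))) with hvdef
  have hv_cont : Continuous fun p : ℝ × EuclideanSpace ℝ (Fin 2) => fderiv ℝ u p ((1 : ℝ), (0 : EuclideanSpace ℝ (Fin 2))) :=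
    (ContinuousLinearMap.apply ℝ ℝ ((1 : ℝ), (0 : EuclideanSpace ℝ (Fin 2)))).continuous.comp hDu_cont
  have hv_bound : ∀ s y, |v s y| ≤ ‖fderiv ℝ u (s, y)‖ := by
    intro s y
    have h1 : ‖((1 : ℝ), (0 : EuclideanSpace ℝ (Fin 2)))‖ = 1 := by
      simp [Prod.norm_def]
    calc |v s y| = ‖fderiv ℝ u (s, y) ((1 : ℝ), (0 : EuclideanSpace ℝ (Fin 2)))‖ := by rw [Real.norm_eq_abs]
    _ ≤ ‖fderiv ℝ u (s, y)‖ * ‖((1 : ℝ), (0 : EuclideanSpace ℝ (Fin 2)))‖ := ContinuousLinearMap.le_opNorm _ _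
    _ = ‖fderiv ℝ u (s, y)‖ := by rw [h1, mul_one]
  have hderiv_pt : ∀ s y, HasDerivAt (fun t => u (t, y)) (v s y) s := by
    intro s y
    have h1 : HasDerivAt (fun t : ℝ => (t, y)) ((1 : ℝ), (0 : EuclideanSpace ℝ (Fin 2))) s :=
      (hasDerivAt_id s).prodMk (hasDerivAt_const s y)
    exact (hu_diff (s, y)).hasFDerivAt.comp_hasDerivAt s h1
  -- integrability on D of slices
  have hInt_u : ∀ s, Integrable (fun y => u (s, y)) (volume.restrict D) := fun s =>
    ((hu_cont.comp (Continuous.prodMk_right s)).continuousOn.integrableOn_compact hDc)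
  have hInt_usq : ∀ s, Integrable (fun y => (u (s, y)) ^ 2) (volume.restrict D) := fun s =>
    (((hu_cont.comp (Continuous.prodMk_right s)).pow 2).continuousOn.integrableOn_compact hDc)
  have hInt_v : ∀ s, Integrable (fun y => v s y) (volume.restrict D) := fun s =>
    ((hv_cont.comp (Continuous.prodMk_right s)).continuousOn.integrableOn_compact hDc)
  have hInt_vsq : ∀ s, Integrable (fun y => (v s y) ^ 2) (volume.restrict D) := fun s =>
    (((hv_cont.comp (Continuous.prodMk_right s)).pow 2).continuousOn.integrableOn_compact hDc)
  have hInt_gsq : ∀ s, Integrable (fun y => ‖fderiv ℝ u (s, y)‖ ^ 2) (volume.restrict D) :=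
    fun s =>
    (((hDu_cont.comp (Continuous.prodMk_right s)).norm.pow 2).continuousOn.integrableOn_compact hDc)
  -- derivative of ubar
  have hubar_deriv : ∀ s₀, HasDerivAt ubar (c⁻¹ * ∫ y in D, v s₀ y) s₀ := by
    intro s₀
    obtain ⟨C, hC⟩ := (IsCompact.prod (isCompact_closedBall s₀ 1) hDc).exists_bound_of_continuousOn
      hDu_cont.continuousOn
    have key := hasDerivAt_integral_of_dominated_loc_of_deriv_le (F := fun s y => u (s, y))
      (F' := v) (x₀ := s₀) (bound := fun _ => C) (μ := volume.restrict D) (ball_mem_nhds s₀ one_pos)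
      (Filter.Eventually.of_forall fun s =>
        (hu_cont.comp (Continuous.prodMk_right s)).aestronglyMeasurable)
      (hInt_u s₀)
      ((hv_cont.comp (Continuous.prodMk_right s₀)).aestronglyMeasurable)
      ?_ (integrable_const C)
      (Filter.Eventually.of_forall fun y => fun s _ => hderiv_pt s y)
    · have hd := key.2
      have : HasDerivAt (fun s => c⁻¹ * ∫ y in D, u (s, y)) (c⁻¹ * ∫ y in D, v s₀ y) s₀ :=
        hd.const_mul c⁻¹
      have hfun : ubar = fun s => c⁻¹ * ∫ y in D, u (s, y) := funext hubar
      rw [hfun]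
      exact this
    · refine (ae_restrict_mem hDm).mono fun y hy => fun s hs => ?_
      have hmem : (s, y) ∈ closedBall s₀ 1 ×ˢ D := ⟨ball_subset_closedBall hs, hy⟩
      calc ‖v s y‖ = |v s y| := rfl
      _ ≤ ‖fderiv ℝ u (s, y)‖ := hv_bound s y
      _ ≤ C := hC _ hmem
  -- pointwise bound
  have hpt : ∀ s, (ubar s) ^ 2 + (deriv ubar s) ^ 2
      ≤ c⁻¹ * ∫ y in D, ((u (s, y)) ^ 2 + ‖fderiv ℝ u (s, y)‖ ^ 2) := by
    intro s
    have hd : deriv ubar s = c⁻¹ * ∫ y in D, v s y := (hubar_deriv s).deriv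
    have hCS1 : (∫ y in D, u (s, y)) ^ 2 ≤ c * ∫ y in D, (u (s, y)) ^ 2 := by
      have := sq_integral_le_measure_mul (volume.restrict D) (hInt_u s) (hInt_usq s)
      rwa [hunivD] at this
    have hCS2 : (∫ y in D, v s y) ^ 2 ≤ c * ∫ y in D, (v s y) ^ 2 := by
      have := sq_integral_le_measure_mul (volume.restrict D) (hInt_v s) (hInt_vsq s)
      rwa [hunivD] at this
    have hvg : ∫ y in D, (v s y) ^ 2 ≤ ∫ y in D, ‖fderiv ℝ u (s, y)‖ ^ 2 := by
      refine integral_mono (hInt_vsq s) (hInt_gsq s) fun y => ?_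
      have := hv_bound s y
      nlinarith [abs_nonneg (v s y), norm_nonneg (fderiv ℝ u (s, y)), sq_abs (v s y)]
    have h1 : (ubar s) ^ 2 ≤ c⁻¹ * ∫ y in D, (u (s, y)) ^ 2 := by
      rw [hubar s]
      rw [mul_pow]
      calc (c⁻¹) ^ 2 * (∫ y in D, u (s, y)) ^ 2
          ≤ (c⁻¹) ^ 2 * (c * ∫ y in D, (u (s, y)) ^ 2) :=
            mul_le_mul_of_nonneg_left hCS1 (by positivity)
      _ = c⁻¹ * ∫ y in D, (u (s, y)) ^ 2 := by
          field_simp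
    have h2 : (deriv ubar s) ^ 2 ≤ c⁻¹ * ∫ y in D, ‖fderiv ℝ u (s, y)‖ ^ 2 := by
      rw [hd, mul_pow]
      calc (c⁻¹) ^ 2 * (∫ y in D, v s y) ^ 2
          ≤ (c⁻¹) ^ 2 * (c * ∫ y in D, (v s y) ^ 2) :=
            mul_le_mul_of_nonneg_left hCS2 (by positivity)
      _ = c⁻¹ * ∫ y in D, (v s y) ^ 2 := by field_simp
      _ ≤ c⁻¹ * ∫ y in D, ‖fderiv ℝ u (s, y)‖ ^ 2 :=
          mul_le_mul_of_nonneg_left hvg (by positivity)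
    have hsplit : ∫ y in D, ((u (s, y)) ^ 2 + ‖fderiv ℝ u (s, y)‖ ^ 2)
        = (∫ y in D, (u (s, y)) ^ 2) + ∫ y in D, ‖fderiv ℝ u (s, y)‖ ^ 2 :=
      integral_add (hInt_usq s) (hInt_gsq s)
    rw [hsplit, mul_add]
    exact add_le_add h1 h2
  -- integrability of the dominating function on I
  set w : ℝ × EuclideanSpace ℝ (Fin 2) → ℝ := fun x => (u x) ^ 2 + ‖fderiv ℝ u x‖ ^ 2 with hwdef
  have hw_int : IntegrableOn w (I ×ˢ D) := husq.add hgrad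
  have hw_int' : Integrable w ((volume.restrict I).prod (volume.restrict D)) := by
    rw [Measure.prod_restrict]
    rw [← Measure.volume_eq_prod]
    exact hw_int
  have hg_int : Integrable (fun s => c⁻¹ * ∫ y in D, w (s, y)) (volume.restrict I) :=
    hw_int'.integral_prod_left.const_mul c⁻¹
  -- integral comparison
  have hmain : ∫ s in I, ((ubar s) ^ 2 + (deriv ubar s) ^ 2)
      ≤ ∫ s in I, c⁻¹ * ∫ y in D, w (s, y) := by
    refine integral_mono_of_nonneg (Filter.Eventually.of_forall fun s => by positivity)
      hg_int (Filter.Eventually.of_forall fun s => hpt s)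
  -- Fubini
  have hfub : ∫ s in I, c⁻¹ * ∫ y in D, w (s, y) = c⁻¹ * ∫ x in I ×ˢ D, w x := by
    rw [integral_const_mul]
    congr 1
    rw [Measure.volume_eq_prod, setIntegral_prod w]
    rw [← Measure.volume_eq_prod]
    exact hw_int
  calc ∫ s in I, ((ubar s) ^ 2 + (deriv ubar s) ^ 2)
      ≤ ∫ s in I, c⁻¹ * ∫ y in D, w (s, y) := hmain
  _ = c⁻¹ * ∫ x in I ×ˢ D, w x := hfub
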